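/- arXiv:2110.10685 — 3 statements merged into one kernel-verified Lean document; each statement's English description precedes it below -/
import Mathlib

section
/- Let p ≥ 1 be an integer and β ∈ ℝ^p. For every bitstring s ∈ {0,1}^{2p+1}, B_{β,F(s)} = B_{β,s}. -/
open Complex Finset

namespace QAOA

abbrev BS (p : ℕ) := Fin (2*p+1) → ZMod 2

def bit (p : ℕ) (s : BS p) (j : ℕ) : ZMod 2 := s ⟨j % (2*p+1), Nat.mod_lt _ (by omega)⟩

/-- Level of symmetry. -/
def L (p : ℕ) (s : BS p) : ℕ :=
  Nat.findGreatest (fun j => ∀ k ≤ j, bit p s (p + k) = bit p s (p - k)) p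

/-- Partial flip. -/
def pflip (p : ℕ) (s : BS p) : BS p :=
  fun j => if p - L p s ≤ (j : ℕ) ∧ (j : ℕ) ≤ p + L p s then s j + 1 else s j

def IsOdd (p : ℕ) (s : BS p) : Prop := bit p s 0 ≠ bit p s p

instance (p : ℕ) : DecidablePred (IsOdd p) := fun s => by unfold IsOdd; infer_instance

/-- (−1)^{1[s odd]} as a complex number. -/
noncomputable def sgn (p : ℕ) (s : BS p) : ℂ := if IsOdd p s then -1 else 1

/-- (−1)^b for a bit b. -/
noncomputable def sgnR (b : ZMod 2) : ℝ := if b = 0 then 1 else -1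

noncomputable def B (p : ℕ) (β : Fin p → ℝ) (s : BS p) : ℂ :=
  ∏ j : Fin p,
    ((Real.cos (β j / 2) : ℂ) ^
      ((if bit p s (j : ℕ) = bit p s ((j : ℕ) + 1) then 1 else 0) +
       (if bit p s (2*p - (j : ℕ)) = bit p s (2*p - (j : ℕ) - 1) then 1 else 0)) *
     (Complex.I * (Real.sin (β j / 2) : ℂ)) ^
      ((if bit p s (j : ℕ) ≠ bit p s ((j : ℕ) + 1) then 1 else 0) +
       (if bit p s (2*p - (j : ℕ)) ≠ bit p s (2*p - (j : ℕ) - 1) then 1 else 0)))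

noncomputable def phi (p : ℕ) (γ : Fin p → ℝ) (s : BS p) : ℝ :=
  ∑ j : Fin p, γ j / 2 * (sgnR (bit p s (2*p - (j : ℕ))) - sgnR (bit p s (j : ℕ)))


lemma bit_pflip (p : ℕ) (s : BS p) (m : ℕ) (hm : m ≤ 2*p) :
    bit p (pflip p s) m =
      if p - L p s ≤ m ∧ m ≤ p + L p s then bit p s m + 1 else bit p s m := by
  have h : m % (2*p+1) = m := Nat.mod_eq_of_lt (by omega)
  simp only [bit, pflip, h]

lemma key (x y : ℂ) (a b : ZMod 2) :
    x ^ ((if a = b + 1 then 1 else 0) + (if a + 1 = b + 1 then 1 else 0)) *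
      y ^ ((if a ≠ b + 1 then 1 else 0) + (if a + 1 ≠ b + 1 then 1 else 0)) =
    x ^ ((if a = b then 1 else 0) + (if a + 1 = b then 1 else 0)) *
      y ^ ((if a ≠ b then 1 else 0) + (if a + 1 ≠ b then 1 else 0)) := by
  rcases (show a = 0 ∨ a = 1 by revert a; decide) with rfl | rfl <;>
    rcases (show b = 0 ∨ b = 1 by revert b; decide) with rfl | rfl <;>
    simp only [show (1 + 1 : ZMod 2) = 0 from by decide, show (0 + 1 : ZMod 2) = 1 from by decide,
      show ((0 : ZMod 2) = 1) = False from by decide, show ((1 : ZMod 2) = 0) = False from by decide,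
      ne_eq, eq_self_iff_true, if_true, if_false, not_true, not_false_iff]

/-- `B_{β, F(s)} = B_{β, s}` for every bitstring `s`. -/
theorem stmt_1 (p : ℕ) (hp : 1 ≤ p) (β : Fin p → ℝ) (s : BS p) :
    B p β (pflip p s) = B p β s := by
  set ℓ := L p s with hℓ
  have hℓle : ℓ ≤ p := Nat.findGreatest_le p
  have e : Nat.findGreatest (fun j => ∀ k ≤ j, bit p s (p + k) = bit p s (p - k)) p = ℓ :=
    hℓ.symm
  have hP : ∀ k ≤ ℓ, bit p s (p + k) = bit p s (p - k) := by
    rw [hℓ]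
    exact Nat.findGreatest_spec
      (P := fun j => ∀ k ≤ j, bit p s (p + k) = bit p s (p - k)) (Nat.zero_le p)
      (by intro k hk; obtain rfl : k = 0 := Nat.le_zero.mp hk; simp)
  have hgr : ℓ < p → bit p s (p + (ℓ+1)) ≠ bit p s (p - (ℓ+1)) := by
    intro hlt h
    have hng : ¬ (∀ k ≤ ℓ+1, bit p s (p + k) = bit p s (p - k)) :=
      Nat.findGreatest_is_greatest
        (P := fun j => ∀ k ≤ j, bit p s (p + k) = bit p s (p - k)) (n := p)
        (by rw [e]; omega) (by omega)
    apply hng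
    intro k hk
    rcases Nat.lt_or_ge k (ℓ+1) with h' | h'
    · exact hP k (by omega)
    · obtain rfl : k = ℓ+1 := by omega
      exact h
  have hbit : ∀ m, m ≤ 2*p → bit p (pflip p s) m =
      if p - ℓ ≤ m ∧ m ≤ p + ℓ then bit p s m + 1 else bit p s m :=
    fun m hm => bit_pflip p s m hm
  unfold B
  apply Finset.prod_congr rfl
  intro j _
  have hj : (j : ℕ) < p := j.2
  rw [hbit (j : ℕ) (by omega), hbit ((j : ℕ) + 1) (by omega),
    hbit (2*p - (j : ℕ)) (by omega), hbit (2*p - (j : ℕ) - 1) (by omega)]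
  rcases lt_trichotomy ((j : ℕ) + 1 + ℓ) p with hc | hc | hc
  · -- all four positions outside the flipped window
    rw [if_neg (by omega : ¬(p - ℓ ≤ (j : ℕ) ∧ (j : ℕ) ≤ p + ℓ)),
      if_neg (by omega : ¬(p - ℓ ≤ (j : ℕ) + 1 ∧ (j : ℕ) + 1 ≤ p + ℓ)),
      if_neg (by omega : ¬(p - ℓ ≤ 2*p - (j : ℕ) ∧ 2*p - (j : ℕ) ≤ p + ℓ)),
      if_neg (by omega : ¬(p - ℓ ≤ 2*p - (j : ℕ) - 1 ∧ 2*p - (j : ℕ) - 1 ≤ p + ℓ))]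
  · -- boundary case
    rw [if_neg (by omega : ¬(p - ℓ ≤ (j : ℕ) ∧ (j : ℕ) ≤ p + ℓ)),
      if_pos (by omega : p - ℓ ≤ (j : ℕ) + 1 ∧ (j : ℕ) + 1 ≤ p + ℓ),
      if_neg (by omega : ¬(p - ℓ ≤ 2*p - (j : ℕ) ∧ 2*p - (j : ℕ) ≤ p + ℓ)),
      if_pos (by omega : p - ℓ ≤ 2*p - (j : ℕ) - 1 ∧ 2*p - (j : ℕ) - 1 ≤ p + ℓ)]
    have hb : bit p s (2*p - (j : ℕ) - 1) = bit p s ((j : ℕ) + 1) := by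
      have h := hP ℓ le_rfl
      have e1 : p + ℓ = 2*p - (j : ℕ) - 1 := by omega
      have e2 : p - ℓ = (j : ℕ) + 1 := by omega
      rw [e1, e2] at h
      exact h
    have hd : bit p s (2*p - (j : ℕ)) ≠ bit p s (j : ℕ) := by
      have h := hgr (by omega)
      have e1 : p + (ℓ+1) = 2*p - (j : ℕ) := by omega
      have e2 : p - (ℓ+1) = (j : ℕ) := by omega
      rw [e1, e2] at h
      exact h
    have hd' : bit p s (2*p - (j : ℕ)) = bit p s (j : ℕ) + 1 := by
      have : ∀ x y : ZMod 2, x ≠ y → x = y + 1 := by decide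
      exact this _ _ hd
    rw [hb, hd']
    exact key _ _ _ _
  · -- all four positions inside the flipped window
    rw [if_pos (by omega : p - ℓ ≤ (j : ℕ) ∧ (j : ℕ) ≤ p + ℓ),
      if_pos (by omega : p - ℓ ≤ (j : ℕ) + 1 ∧ (j : ℕ) + 1 ≤ p + ℓ),
      if_pos (by omega : p - ℓ ≤ 2*p - (j : ℕ) ∧ 2*p - (j : ℕ) ≤ p + ℓ),
      if_pos (by omega : p - ℓ ≤ 2*p - (j : ℕ) - 1 ∧ 2*p - (j : ℕ) - 1 ≤ p + ℓ)]
    simp only [ne_eq, add_left_inj]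

end QAOA
end

section
/- Let p ≥ 1 be an integer and β ∈ ℝ^p. Then ∑_{t ∈ {0,1}^{2p+1}, L(t) = p} (−1)^{1[t is odd]} · B_{β,t} = 2, where the sum runs over all bitstrings t that are symmetric about their middle bit (t_{p+k} = t_{p−k} for all 0 ≤ k ≤ p). -/
open Complex Finset

namespace QAOA

/-! ### Auxiliary lemmas -/

lemma zmod2_cases (c : ZMod 2) : c = 0 ∨ c = 1 := by revert c; decide

lemma zmod2_eq_iff (a b : ZMod 2) : a = b ↔ a + b = 0 := by revert a b; decide

lemma sum_zmod2 (f : ZMod 2 → ℂ) : ∑ b : ZMod 2, f b = f 0 + f 1 := by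
  rw [show (Finset.univ : Finset (ZMod 2)) = {0, 1} by decide]
  rw [Finset.sum_pair (by decide)]

lemma sum_zmod2_shift (f : ZMod 2 → ℂ) (c : ZMod 2) :
    ∑ b : ZMod 2, f (c + b) = f 0 + f 1 := by
  rcases zmod2_cases c with rfl | rfl
  · simp [sum_zmod2]
  · rw [sum_zmod2 (fun b => f (1 + b)),
      show (1:ZMod 2) + 0 = 1 by decide, show (1:ZMod 2) + 1 = 0 by decide, add_comm]

lemma tele (n : ℕ) (g : ℕ → ZMod 2) :
    ∏ j ∈ Finset.range n, (if g j = g (j+1) then (1:ℂ) else -1)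
      = if g 0 = g n then 1 else -1 := by
  induction n with
  | zero => simp
  | succ n ih =>
    rw [Finset.prod_range_succ, ih]
    have h3 : ∀ a b c : ZMod 2, a ≠ b → b ≠ c → a = c := by decide
    by_cases h1 : g 0 = g n <;> by_cases h2 : g n = g (n+1)
    · rw [if_pos h1, if_pos h2, if_pos (h1.trans h2)]; ring
    · rw [if_pos h1, if_neg h2,
        if_neg (show ¬ g 0 = g (n+1) from fun h => h2 (h1.symm.trans h))]; ring
    · rw [if_neg h1, if_pos h2,
        if_neg (show ¬ g 0 = g (n+1) from fun h => h1 (h.trans h2.symm))]; ring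
    · rw [if_neg h1, if_neg h2, if_pos (h3 _ _ _ h1 h2)]; ring

lemma key_s3 (n : ℕ) (G : Fin n → ZMod 2 → ℂ) :
    ∑ r : Fin (n+1) → ZMod 2, ∏ k : Fin n, G k (r k.succ + r k.castSucc)
      = 2 * ∏ k : Fin n, (G k 0 + G k 1) := by
  induction n with
  | zero => simp [Finset.card_univ]
  | succ n ih =>
    rw [← Equiv.sum_comp (Fin.consEquiv (fun _ : Fin (n+2) => ZMod 2))
      (fun r => ∏ k : Fin (n+1), G k (r k.succ + r k.castSucc))]
    rw [Fintype.sum_prod_type]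
    have step : ∀ (x : ZMod 2) (r' : Fin (n+1) → ZMod 2),
        (∏ k : Fin (n+1), G k
          ((Fin.consEquiv (fun _ : Fin (n+2) => ZMod 2)) (x, r') k.succ +
           (Fin.consEquiv (fun _ : Fin (n+2) => ZMod 2)) (x, r') k.castSucc))
        = G 0 (r' 0 + x) * ∏ k : Fin n, G k.succ (r' k.succ + r' k.castSucc) := by
      intro x r'
      rw [Fin.prod_univ_succ]
      simp only [Fin.consEquiv_apply, ← Fin.succ_castSucc, Fin.cons_succ,
        Fin.castSucc_zero, Fin.cons_zero]
    simp only [step]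
    rw [Finset.sum_comm]
    have h2 : ∀ r' : Fin (n+1) → ZMod 2,
        ∑ x : ZMod 2, G 0 (r' 0 + x) * ∏ k : Fin n, G k.succ (r' k.succ + r' k.castSucc)
        = (G 0 0 + G 0 1) * ∏ k : Fin n, G k.succ (r' k.succ + r' k.castSucc) := by
      intro r'
      rw [← Finset.sum_mul, sum_zmod2_shift (fun b => G 0 b) (r' 0)]
    simp only [h2]
    rw [← Finset.mul_sum, ih (fun k => G k.succ), Fin.prod_univ_succ]
    ring

lemma bit_eq (p : ℕ) (s : BS p) (j : ℕ) (h : j < 2*p+1) :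
    bit p s j = s ⟨j, h⟩ := by
  unfold bit
  congr 1
  exact Fin.ext (Nat.mod_eq_of_lt h)

lemma L_eq_iff (p : ℕ) (hp : 1 ≤ p) (t : BS p) :
    L p t = p ↔ ∀ k ≤ p, bit p t (p + k) = bit p t (p - k) := by
  constructor
  · intro h
    have := (Nat.findGreatest_eq_iff (P := fun j => ∀ k ≤ j, bit p t (p + k) = bit p t (p - k))
      (k := p) (m := p)).mp h
    exact this.2.1 (by omega)
  · intro h
    have h1 : L p t ≤ p := Nat.findGreatest_le p
    have h2 : p ≤ L p t := Nat.le_findGreatest le_rfl h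
    omega

/-- The symmetric string built from its right half. -/
def e (p : ℕ) (r : Fin (p+1) → ZMod 2) : BS p :=
  fun j => r ⟨if p ≤ (j : ℕ) then (j : ℕ) - p else p - (j : ℕ), by
    rcases j with ⟨j, hj⟩; dsimp only; split <;> omega⟩

lemma bit_e (p : ℕ) (r : Fin (p+1) → ZMod 2) (j : ℕ) (h : j ≤ p) :
    bit p (e p r) j = r ⟨p - j, by omega⟩ := by
  rw [bit_eq p _ j (by omega)]
  unfold e
  congr 1
  apply Fin.ext
  simp only
  split <;> omega

lemma bit_e' (p : ℕ) (r : Fin (p+1) → ZMod 2) (k : ℕ) (h : k ≤ p) :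
    bit p (e p r) (p + k) = r ⟨k, by omega⟩ := by
  rw [bit_eq p _ (p + k) (by omega)]
  unfold e
  congr 1
  apply Fin.ext
  simp only
  rw [if_pos (by omega)]
  omega

lemma e_symm (p : ℕ) (r : Fin (p+1) → ZMod 2) :
    ∀ k ≤ p, bit p (e p r) (p + k) = bit p (e p r) (p - k) := by
  intro k hk
  rw [bit_eq p _ (p+k) (by omega), bit_eq p _ (p-k) (by omega)]
  unfold e
  congr 1
  apply Fin.ext
  simp only
  split <;> split <;> omega

lemma sgn_eq_prod (p : ℕ) (t : BS p) :
    sgn p t = ∏ j : Fin p, (if bit p t (j : ℕ) = bit p t ((j : ℕ) + 1) then (1:ℂ) else -1) := by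
  rw [show (∏ j : Fin p, (if bit p t (j : ℕ) = bit p t ((j : ℕ) + 1) then (1:ℂ) else -1))
      = ∏ j ∈ Finset.range p, (if bit p t j = bit p t (j + 1) then (1:ℂ) else -1) from
    (Finset.prod_range fun j => (if bit p t j = bit p t (j + 1) then (1:ℂ) else -1)).symm]
  rw [tele p (bit p t)]
  unfold sgn IsOdd
  by_cases h : bit p t 0 = bit p t p
  · rw [if_pos h]; exact if_neg (show ¬ IsOdd p t from fun hh => hh h)
  · rw [if_neg h]; exact if_pos (show IsOdd p t from h)

/-- The per-layer factor. -/
noncomputable def Fq (p : ℕ) (β : Fin p → ℝ) (k : Fin p) (a : ZMod 2) : ℂ :=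
  if a = 0 then ((Real.cos (β k / 2) : ℂ))^2 else ((Real.sin (β k / 2) : ℂ))^2

lemma sgn_mul_B (p : ℕ) (β : Fin p → ℝ) (t : BS p)
    (hsym : ∀ k ≤ p, bit p t (p + k) = bit p t (p - k)) :
    sgn p t * B p β t = ∏ j : Fin p,
      (if bit p t (j : ℕ) = bit p t ((j : ℕ) + 1)
        then ((Real.cos (β j / 2) : ℂ))^2 else ((Real.sin (β j / 2) : ℂ))^2) := by
  rw [sgn_eq_prod, B, ← Finset.prod_mul_distrib]
  apply Finset.prod_congr rfl
  intro j _
  have hj : (j : ℕ) < p := j.isLt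
  have h1 : bit p t (2*p - (j : ℕ)) = bit p t (j : ℕ) := by
    have := hsym (p - (j : ℕ)) (by omega)
    rw [show p + (p - (j : ℕ)) = 2*p - (j : ℕ) by omega,
        show p - (p - (j : ℕ)) = (j : ℕ) by omega] at this
    exact this
  have h2 : bit p t (2*p - (j : ℕ) - 1) = bit p t ((j : ℕ) + 1) := by
    have := hsym (p - (j : ℕ) - 1) (by omega)
    rw [show p + (p - (j : ℕ) - 1) = 2*p - (j : ℕ) - 1 by omega,
        show p - (p - (j : ℕ) - 1) = (j : ℕ) + 1 by omega] at this
    exact this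
  rw [h1, h2]
  by_cases h : bit p t (j : ℕ) = bit p t ((j : ℕ) + 1)
  · simp only [h, if_pos, ite_true, ne_eq, not_true_eq_false, ite_false]
    norm_num
  · simp only [h, ite_false, ne_eq, not_false_eq_true, ite_true]
    rw [mul_pow, Complex.I_sq]
    ring

set_option maxHeartbeats 2000000 in
/-- `∑_{t : L(t) = p} (−1)^{1[t odd]} B_{β,t} = 2`. -/
theorem stmt_3 (p : ℕ) (hp : 1 ≤ p) (β : Fin p → ℝ) :
    ∑ t ∈ Finset.univ.filter (fun t : BS p => L p t = p), sgn p t * B p β t = 2 := by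
  classical
  have hbij : ∑ r : Fin (p+1) → ZMod 2, sgn p (e p r) * B p β (e p r)
      = ∑ t ∈ Finset.univ.filter (fun t : BS p => L p t = p), sgn p t * B p β t := by
    refine Finset.sum_nbij' (e p) (fun t => fun k : Fin (p+1) => t ⟨p + (k : ℕ), by omega⟩)
      ?_ ?_ ?_ ?_ ?_
    · intro r _
      rw [Finset.mem_filter]
      exact ⟨Finset.mem_univ _, (L_eq_iff p hp _).mpr (e_symm p r)⟩
    · intro t _; exact Finset.mem_univ _
    · intro r _
      funext k
      show e p r ⟨p + (k : ℕ), by omega⟩ = r k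
      have h1 := bit_e' p r (k : ℕ) (by omega)
      rw [bit_eq p (e p r) (p + (k : ℕ)) (by omega)] at h1
      exact h1.trans (congrArg r (Fin.ext rfl))
    · intro t ht
      rw [Finset.mem_filter] at ht
      have hsym := (L_eq_iff p hp t).mp ht.2
      funext j
      rcases j with ⟨j, hj⟩
      show e p (fun k : Fin (p+1) => t ⟨p + (k : ℕ), by omega⟩) ⟨j, hj⟩ = t ⟨j, hj⟩
      set rt : Fin (p+1) → ZMod 2 := fun k : Fin (p+1) => t ⟨p + (k : ℕ), by omega⟩ with hrt
      rw [← bit_eq p (e p rt) j hj, ← bit_eq p t j hj]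
      by_cases h : p ≤ j
      · rw [show j = p + (j - p) by omega, bit_e' p rt (j - p) (by omega),
          bit_eq p t (p + (j - p)) (by omega)]
      · have e1 : bit p (e p rt) j = bit p (e p rt) (p + (p - j)) := by
          have := e_symm p rt (p - j) (by omega)
          rw [show p - (p - j) = j by omega] at this
          exact this.symm
        rw [e1, bit_e' p rt (p - j) (by omega)]
        have e2 := hsym (p - j) (by omega)
        rw [show p - (p - j) = j by omega] at e2
        rw [← e2, bit_eq p t (p + (p - j)) (by omega)]
    · intro r _
      rfl
  rw [← hbij]
  have factor : ∀ (r : Fin (p+1) → ZMod 2) (j : Fin p),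
      (if bit p (e p r) (j : ℕ) = bit p (e p r) ((j : ℕ) + 1)
        then ((Real.cos (β j / 2) : ℂ))^2 else ((Real.sin (β j / 2) : ℂ))^2)
      = Fq p β j (r (Fin.rev j).succ + r (Fin.rev j).castSucc) := by
    intro r j
    unfold Fq
    have hj : (j : ℕ) < p := j.isLt
    have hs : (Fin.rev j).succ = (⟨p - (j : ℕ), by omega⟩ : Fin (p+1)) := by
      apply Fin.ext
      rw [Fin.val_succ, Fin.val_rev]
      simp only
      omega
    have hc : (Fin.rev j).castSucc = (⟨p - (j : ℕ) - 1, by omega⟩ : Fin (p+1)) := by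
      apply Fin.ext
      rw [Fin.coe_castSucc, Fin.val_rev]
      simp only
      omega
    rw [hs, hc, bit_e p r (j : ℕ) (by omega), bit_e p r ((j : ℕ) + 1) (by omega)]
    rw [show (⟨p - ((j : ℕ) + 1), by omega⟩ : Fin (p+1)) = ⟨p - (j : ℕ) - 1, by omega⟩ from
      Fin.ext (by simp only; omega)]
    by_cases h : r ⟨p - (j : ℕ), by omega⟩ = r ⟨p - (j : ℕ) - 1, by omega⟩
    · rw [if_pos h, if_pos ((zmod2_eq_iff _ _).mp h)]
    · rw [if_neg h, if_neg (fun hh => h ((zmod2_eq_iff _ _).mpr hh))]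
  calc ∑ r : Fin (p+1) → ZMod 2, sgn p (e p r) * B p β (e p r)
      = ∑ r : Fin (p+1) → ZMod 2, ∏ k : Fin p,
          Fq p β (Fin.rev k) (r k.succ + r k.castSucc) := by
        apply Finset.sum_congr rfl
        intro r _
        rw [sgn_mul_B p β (e p r) (e_symm p r)]
        exact Fintype.prod_bijective Fin.rev Fin.rev_involutive.bijective _ _
          (fun j => by rw [factor r j]; simp [Fin.rev_rev])
    _ = 2 * ∏ k : Fin p, (Fq p β (Fin.rev k) 0 + Fq p β (Fin.rev k) 1) :=
        key_s3 p (fun k => Fq p β (Fin.rev k))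
    _ = 2 := by
        rw [Finset.prod_congr rfl (fun k _ => by
          unfold Fq
          rw [if_pos rfl, if_neg (by decide), ← Complex.ofReal_pow, ← Complex.ofReal_pow,
            ← Complex.ofReal_add, add_comm, Real.sin_sq_add_cos_sq, Complex.ofReal_one]),
          Finset.prod_const_one, mul_one]

end QAOA
end

section
/- Let p ≥ 1, d > 0 real, and β, γ ∈ ℝ^p, and let (R_s)_{s∈{0,1}^{2p+1}} be defined by the R-recursion in the context. Then the same family (R_s) also satisfies the recursion with cosines in place of complex exponentials: for L(s) ∈ {p−1, p}, R_s = exp(−d(1 − (1/2)∑_{t : L(t)=p} (−1)^{1[t is odd]} B_{β,t} cos φ(γ, s⊕t))); and for L(s) ≤ p−2, R_s = exp(−d(1 − (1/2)∑_{t : L(t)=p} (−1)^{1[t is odd]} B_{β,t} cos φ(γ, s⊕t))) · exp((d/2) ∑_{t : L(s) < L(t) < p} (−1)^{1[t is odd]} B_{β,t} R_t cos φ(γ, s⊕t)). -/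
open Complex Finset

namespace QAOA

/-! QAOA machinery. -/

/-- Computational basis states on `n` qubits. -/
abbrev Q (n : ℕ) := Fin n → ZMod 2

/-- Pauli `X` on qubit `k`: entry `(x, y)` is `1` iff `y` equals `x` with bit `k` flipped. -/
def PauliX (n : ℕ) (k : Fin n) : Matrix (Q n) (Q n) ℂ :=
  fun x y => if y = Function.update x k (x k + 1) then 1 else 0

/-- The mixer Hamiltonian `H_B = ∑ₖ Xₖ`. -/
noncomputable def HB (n : ℕ) : Matrix (Q n) (Q n) ℂ := ∑ k : Fin n, PauliX n k

/-- The state `|+⟩` with all entries `2^{-n/2}`. -/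
noncomputable def plusState (n : ℕ) : Q n → ℂ := fun _ => (((2 : ℝ) ^ (-(n : ℝ) / 2) : ℝ) : ℂ)

/-- The level-`p` QAOA state
`e^{−iβ_{p−1}H_B/2} e^{−iγ_{p−1}H_C/2} ⋯ e^{−iβ_0 H_B/2} e^{−iγ_0 H_C/2} |+⟩`. -/
noncomputable def qaoaState (n p : ℕ) (Hc : Matrix (Q n) (Q n) ℂ) (β γ : Fin p → ℝ) : Q n → ℂ :=
  ((List.ofFn (fun j : Fin p =>
      NormedSpace.exp ((-(Complex.I * ((β j : ℂ) / 2))) • HB n) *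
      NormedSpace.exp ((-(Complex.I * ((γ j : ℂ) / 2))) • Hc))).reverse.prod).mulVec
    (plusState n)

/-- The energy `⟨ψ|H_C|ψ⟩`. -/
noncomputable def energy (n : ℕ) (Hc : Matrix (Q n) (Q n) ℂ) (ψ : Q n → ℂ) : ℂ :=
  ∑ x, (starRingEnd ℂ) (ψ x) * Hc.mulVec ψ x

/-- `D`-element subsets of `{0, …, n−1}`. -/
abbrev DSub (n D : ℕ) := {S : Finset (Fin n) // S.card = D}

/-- `D`-spin problem Hamiltonian: diagonal with entry `∑_S J_S ∏_{k ∈ S} (−1)^{x_k}`. -/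
noncomputable def HCspin (n D : ℕ) (J : DSub n D → ℝ) : Matrix (Q n) (Q n) ℂ :=
  Matrix.diagonal (fun x => ((∑ S : DSub n D, J S * ∏ k ∈ S.1, sgnR (x k) : ℝ) : ℂ))

/-- All tuples of nonnegative integers indexed by `κ` summing to `D`. -/
def tuples (κ : Type*) [Fintype κ] [DecidableEq κ] (D : ℕ) : Finset (κ → ℕ) :=
  (Fintype.piFinset (fun _ : κ => Finset.range (D + 1))).filter (fun g => ∑ s, g s = D)

/-- Ordered pairs `k < l`, representing the 2-element subsets of `{0, …, n−1}`. -/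
abbrev Pair (n : ℕ) := {e : Fin n × Fin n // e.1 < e.2}

/-- MaxCut-type problem Hamiltonian: diagonal with entry `∑_{k<l} J_{kl} (−1)^{x_k}(−1)^{x_l}`. -/
noncomputable def HCpair (n : ℕ) (J : Pair n → ℝ) : Matrix (Q n) (Q n) ℂ :=
  Matrix.diagonal (fun x => ((∑ e : Pair n, J e * sgnR (x e.1.1) * sgnR (x e.1.2) : ℝ) : ℂ))

/-- The quantities `R_s`, defined by downward recursion on the level of symmetry:
for `L(s) ∈ {p−1, p}` (where the second factor is `1`),
`R_s = exp(−d(1 − (1/2)∑_{t : L(t)=p} (−1)^{1[t odd]} B_{β,t} e^{iφ(γ, s⊕t)}))`,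
and for `L(s) ≤ p−2` there is the extra factor
`exp((d/2) ∑_{t : L(s)<L(t)<p} (−1)^{1[t odd]} B_{β,t} R_t e^{iφ(γ, s⊕t)})`. -/
noncomputable def Rrec (p : ℕ) (d : ℝ) (β γ : Fin p → ℝ) : BS p → ℂ
  | s =>
    Complex.exp (-(d : ℂ) * (1 - (1/2 : ℂ) *
        ∑ t ∈ Finset.univ.filter (fun t : BS p => L p t = p),
          sgn p t * B p β t * Complex.exp (Complex.I * (phi p γ (s + t) : ℝ)))) *
    (if L p s + 2 ≤ p then
      Complex.exp (((d : ℂ) / 2) *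
        ∑ t ∈ (Finset.univ.filter (fun t : BS p => L p s < L p t ∧ L p t < p)).attach,
          sgn p t.1 * B p β t.1 * Rrec p d β γ t.1 *
            Complex.exp (Complex.I * (phi p γ (s + t.1) : ℝ)))
      else 1)
  termination_by s => p - L p s
  decreasing_by
    have ht := (Finset.mem_filter.mp t.2).2
    show p - L p t.1 < p - L p s
    omega


/-! new auxiliary lemmas -/

def flip1 (p : ℕ) : BS p := fun _ => 1

lemma zmod2_aa : ∀ a : ZMod 2, a + 1 + 1 = a := by decide

lemma flip1_add_flip1 (p : ℕ) (s : BS p) : s + flip1 p + flip1 p = s := by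
  funext j; exact zmod2_aa (s j)

lemma flip1_flip1 (p : ℕ) : flip1 p + flip1 p = 0 := by
  funext j; show (1 : ZMod 2) + 1 = 0; decide

lemma add_flip_flip (p : ℕ) (s t : BS p) : s + flip1 p + (t + flip1 p) = s + t := by
  have h : s + flip1 p + (t + flip1 p) = s + t + (flip1 p + flip1 p) := by abel
  rw [h, flip1_flip1, add_zero]

lemma bit_flip (p : ℕ) (s : BS p) (j : ℕ) : bit p (s + flip1 p) j = bit p s j + 1 := rfl

lemma findGreatest_congr {P Q : ℕ → Prop} [DecidablePred P] [DecidablePred Q]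
    (h : ∀ n, P n ↔ Q n) (n : ℕ) : Nat.findGreatest P n = Nat.findGreatest Q n := by
  induction n with
  | zero => rfl
  | succ n ih => rw [Nat.findGreatest_succ, Nat.findGreatest_succ, ih, if_congr (h _) rfl rfl]

lemma L_flip (p : ℕ) (s : BS p) : L p (s + flip1 p) = L p s := by
  unfold L
  exact findGreatest_congr (fun j => by simp [bit_flip]) p

lemma sgn_flip (p : ℕ) (s : BS p) : sgn p (s + flip1 p) = sgn p s := by
  unfold sgn IsOdd
  simp [bit_flip]

lemma B_flip (p : ℕ) (β : Fin p → ℝ) (s : BS p) : B p β (s + flip1 p) = B p β s := by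
  unfold B
  simp [bit_flip]

lemma zmod2_cases_s14 : ∀ b : ZMod 2, b = 0 ∨ b = 1 := by decide

lemma sgnR_add_one (b : ZMod 2) : sgnR (b + 1) = -sgnR b := by
  unfold sgnR
  have h01 : (0 : ZMod 2) + 1 = 1 := by decide
  have h11 : (1 : ZMod 2) + 1 = 0 := by decide
  rcases zmod2_cases_s14 b with h | h <;> simp [h, h01, h11]

lemma phi_flip (p : ℕ) (γ : Fin p → ℝ) (s : BS p) : phi p γ (s + flip1 p) = -phi p γ s := by
  unfold phi
  rw [← Finset.sum_neg_distrib]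
  congr 1; funext j
  rw [bit_flip, bit_flip, sgnR_add_one, sgnR_add_one]
  ring

lemma sum_flip (p : ℕ) (T : Finset (BS p)) (hT : ∀ t, t ∈ T → t + flip1 p ∈ T)
    (f : BS p → ℂ) : ∑ t ∈ T, f t = ∑ t ∈ T, f (t + flip1 p) :=
  Finset.sum_nbij' (i := fun t => t + flip1 p) (j := fun t => t + flip1 p)
    (fun a ha => hT a ha) (fun a ha => hT a ha)
    (fun a _ => flip1_add_flip1 p a) (fun a _ => flip1_add_flip1 p a)
    (fun a _ => by rw [flip1_add_flip1])

lemma cos_as_exp (x : ℝ) :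
    ((Real.cos x : ℝ) : ℂ) = (Complex.exp (Complex.I*x) + Complex.exp (-(Complex.I*x)))/2 := by
  rw [Complex.ofReal_cos, Complex.cos]
  ring_nf

lemma sum_exp_eq_sum_cos (p : ℕ) (γ : Fin p → ℝ) (s : BS p) (T : Finset (BS p))
    (hT : ∀ t, t ∈ T → t + flip1 p ∈ T) (f : BS p → ℂ)
    (hf : ∀ t, f (t + flip1 p) = f t) :
    ∑ t ∈ T, f t * Complex.exp (Complex.I * (phi p γ (s + t) : ℝ)) =
    ∑ t ∈ T, f t * ((Real.cos (phi p γ (s + t)) : ℝ) : ℂ) := by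
  have key : ∑ t ∈ T, f t * Complex.exp (Complex.I * (phi p γ (s + t) : ℝ)) =
      ∑ t ∈ T, f t * Complex.exp (-(Complex.I * (phi p γ (s + t) : ℝ))) := by
    rw [sum_flip p T hT]
    refine Finset.sum_congr rfl (fun t _ => ?_)
    rw [hf, ← add_assoc, phi_flip]
    push_cast
    ring_nf
  have h2 : (2 : ℂ) * ∑ t ∈ T, f t * Complex.exp (Complex.I * (phi p γ (s + t) : ℝ)) =
      2 * ∑ t ∈ T, f t * ((Real.cos (phi p γ (s + t)) : ℝ) : ℂ) := by
    rw [two_mul]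
    nth_rewrite 2 [key]
    rw [← Finset.sum_add_distrib, Finset.mul_sum]
    refine Finset.sum_congr rfl (fun t _ => ?_)
    rw [cos_as_exp]
    ring
  exact mul_left_cancel₀ (two_ne_zero (α := ℂ)) h2

lemma filter_Lp_flip (p : ℕ) (t : BS p)
    (ht : t ∈ Finset.univ.filter (fun t : BS p => L p t = p)) :
    t + flip1 p ∈ Finset.univ.filter (fun t : BS p => L p t = p) := by
  simp only [Finset.mem_filter, Finset.mem_univ, true_and] at ht ⊢
  rw [L_flip]
  exact ht

lemma filter_mid_flip (p m : ℕ) (t : BS p)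
    (ht : t ∈ Finset.univ.filter (fun t : BS p => m < L p t ∧ L p t < p)) :
    t + flip1 p ∈ Finset.univ.filter (fun t : BS p => m < L p t ∧ L p t < p) := by
  simp only [Finset.mem_filter, Finset.mem_univ, true_and] at ht ⊢
  rw [L_flip]
  exact ht

/-- The first sum is invariant under flipping `s`. -/
lemma sum1_flip (p : ℕ) (β γ : Fin p → ℝ) (s : BS p) :
    ∑ t ∈ Finset.univ.filter (fun t : BS p => L p t = p),
      sgn p t * B p β t * Complex.exp (Complex.I * (phi p γ (s + flip1 p + t) : ℝ)) =
    ∑ t ∈ Finset.univ.filter (fun t : BS p => L p t = p),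
      sgn p t * B p β t * Complex.exp (Complex.I * (phi p γ (s + t) : ℝ)) := by
  rw [sum_flip p _ (filter_Lp_flip p)]
  refine Finset.sum_congr rfl (fun t _ => ?_)
  rw [sgn_flip, B_flip, add_flip_flip]

set_option maxHeartbeats 1000000 in
lemma Rrec_flip (p : ℕ) (d : ℝ) (β γ : Fin p → ℝ) (s : BS p) :
    Rrec p d β γ (s + flip1 p) = Rrec p d β γ s := by
  have key : ∀ n : ℕ, ∀ s : BS p, p - L p s ≤ n →
      Rrec p d β γ (s + flip1 p) = Rrec p d β γ s := by
    intro n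
    induction n with
    | zero =>
      intro s hs
      have hL : L p s = p := by
        have : L p s ≤ p := Nat.findGreatest_le p
        omega
      have hcond : ¬ (L p s + 2 ≤ p) := by omega
      rw [Rrec, Rrec, L_flip, if_neg hcond, if_neg hcond, sum1_flip]
    | succ n ih =>
      intro s hs
      rw [Rrec, Rrec, L_flip, sum1_flip]
      by_cases hcond : L p s + 2 ≤ p
      · rw [if_pos hcond, if_pos hcond]
        have e2 :
            ∑ t ∈ (Finset.univ.filter
                (fun t : BS p => L p s < L p t ∧ L p t < p)).attach,
              sgn p t.1 * B p β t.1 * Rrec p d β γ t.1 *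
                Complex.exp (Complex.I * ((phi p γ (s + flip1 p + t.1) : ℝ) : ℂ)) =
            ∑ t ∈ (Finset.univ.filter
                (fun t : BS p => L p s < L p t ∧ L p t < p)).attach,
              sgn p t.1 * B p β t.1 * Rrec p d β γ t.1 *
                Complex.exp (Complex.I * ((phi p γ (s + t.1) : ℝ) : ℂ)) := by
          rw [Finset.sum_attach _ (fun t => sgn p t * B p β t * Rrec p d β γ t *
              Complex.exp (Complex.I * ((phi p γ (s + flip1 p + t) : ℝ) : ℂ))),
            Finset.sum_attach _ (fun t => sgn p t * B p β t * Rrec p d β γ t *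
              Complex.exp (Complex.I * ((phi p γ (s + t) : ℝ) : ℂ))),
            sum_flip p _ (filter_mid_flip p (L p s))]
          refine Finset.sum_congr rfl (fun t ht => ?_)
          simp only [Finset.mem_filter, Finset.mem_univ, true_and] at ht
          have hrec : Rrec p d β γ (t + flip1 p) = Rrec p d β γ t := ih t (by omega)
          rw [sgn_flip, B_flip, hrec, add_flip_flip]
        rw [e2]
      · rw [if_neg hcond, if_neg hcond]
  exact key (p - L p s) s le_rfl


set_option maxHeartbeats 1000000 in
/-- the `R_s` also satisfy the recursion with cosines in place of
complex exponentials. -/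
theorem stmt_14 (p : ℕ) (hp : 1 ≤ p) (d : ℝ) (hd : 0 < d) (β γ : Fin p → ℝ) (s : BS p) :
    (L p s = p - 1 ∨ L p s = p →
      Rrec p d β γ s =
        Complex.exp (-(d : ℂ) * (1 - (1/2 : ℂ) *
          ∑ t ∈ Finset.univ.filter (fun t : BS p => L p t = p),
            sgn p t * B p β t * ((Real.cos (phi p γ (s + t)) : ℝ) : ℂ)))) ∧
    (L p s + 2 ≤ p →
      Rrec p d β γ s =
        Complex.exp (-(d : ℂ) * (1 - (1/2 : ℂ) *
          ∑ t ∈ Finset.univ.filter (fun t : BS p => L p t = p),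
            sgn p t * B p β t * ((Real.cos (phi p γ (s + t)) : ℝ) : ℂ))) *
        Complex.exp (((d : ℂ) / 2) *
          ∑ t ∈ Finset.univ.filter (fun t : BS p => L p s < L p t ∧ L p t < p),
            sgn p t * B p β t * Rrec p d β γ t *
              ((Real.cos (phi p γ (s + t)) : ℝ) : ℂ))) := by
  have hsum1 : ∑ t ∈ Finset.univ.filter (fun t : BS p => L p t = p),
      sgn p t * B p β t * Complex.exp (Complex.I * (phi p γ (s + t) : ℝ)) =
      ∑ t ∈ Finset.univ.filter (fun t : BS p => L p t = p),
      sgn p t * B p β t * ((Real.cos (phi p γ (s + t)) : ℝ) : ℂ) :=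
    sum_exp_eq_sum_cos p γ s _ (filter_Lp_flip p) (fun t => sgn p t * B p β t)
      (fun t => by
        show sgn p (t + flip1 p) * B p β (t + flip1 p) = _
        rw [sgn_flip, B_flip])
  constructor
  · intro h
    rw [Rrec]
    have hcond : ¬ (L p s + 2 ≤ p) := by omega
    rw [if_neg hcond, mul_one, hsum1]
  · intro h
    rw [Rrec, if_pos h, hsum1]
    have e2 : ∑ t ∈ (Finset.univ.filter
          (fun t : BS p => L p s < L p t ∧ L p t < p)).attach,
        sgn p t.1 * B p β t.1 * Rrec p d β γ t.1 *
          Complex.exp (Complex.I * ((phi p γ (s + t.1) : ℝ) : ℂ)) =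
        ∑ t ∈ Finset.univ.filter (fun t : BS p => L p s < L p t ∧ L p t < p),
        sgn p t * B p β t * Rrec p d β γ t *
          ((Real.cos (phi p γ (s + t)) : ℝ) : ℂ) := by
      rw [Finset.sum_attach _ (fun t => sgn p t * B p β t * Rrec p d β γ t *
          Complex.exp (Complex.I * ((phi p γ (s + t) : ℝ) : ℂ)))]
      exact sum_exp_eq_sum_cos p γ s _ (filter_mid_flip p (L p s))
        (fun t => sgn p t * B p β t * Rrec p d β γ t)
        (fun t => by
          show sgn p (t + flip1 p) * B p β (t + flip1 p) * Rrec p d β γ (t + flip1 p) = _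
          rw [sgn_flip, B_flip, Rrec_flip])
    rw [e2]


end QAOA
end
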